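/- arXiv:2008.11877 — 7 statements merged into one kernel-verified Lean document; each statement's English description precedes it below -/
import Mathlib

section
/- Let V be a finite-dimensional real inner product space, L : V → V a symmetric linear map, Δt > 0, and b ∈ V. Suppose u₀, u₁, q₀, q₁ ∈ V and r₀, r₁ ∈ ℝ satisfy the first-order SAV-DG step: (u₁ − u₀)/Δt = −L q₁ − r₁ b, q₀ = L u₀, q₁ = L u₁, and (r₁ − r₀)/Δt = (1/2) ⟪b, (u₁ − u₀)/Δt⟫. Then, with E(q, r) = (1/2)‖q‖² + r², the energy identity E(q₁, r₁) = E(q₀, r₀) − ‖u₁ − u₀‖²/Δt − (1/2)‖q₁ − q₀‖² − (r₁ − r₀)² holds. -/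
open RealInnerProductSpace

/-! Take the inner product of the `u`-equation with `u₁ - u₀`. Symmetry of `L` turns the
`L q₁` term into `⟪q₁, q₁ - q₀⟫`, the `r`-equation turns `⟪b, u₁ - u₀⟫` into `2 (r₁ - r₀)`, and
the identity `2⟪x, x - y⟫ = ‖x‖² - ‖y‖² + ‖x - y‖²`, applied to `q` and to `r`, rearranges the
result into the energy identity. -/

theorem two_mul_real_inner_self_sub {V : Type*} [NormedAddCommGroup V] [InnerProductSpace ℝ V]
    (x y : V) : 2 * ⟪x, x - y⟫ = ‖x‖ ^ 2 - ‖y‖ ^ 2 + ‖x - y‖ ^ 2 := by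
  rw [norm_sub_sq_real, inner_sub_right, real_inner_self_eq_norm_sq]
  ring

theorem sav_dg_first_order_energy_identity_general
    {V : Type*} [NormedAddCommGroup V] [InnerProductSpace ℝ V]
    (L : V →ₗ[ℝ] V) (hL : ∀ v w : V, ⟪L v, w⟫ = ⟪v, L w⟫)
    (Δt : ℝ) (hΔt : 0 < Δt) (b : V)
    (u₀ u₁ q₀ q₁ : V) (r₀ r₁ : ℝ)
    (h1 : (1 / Δt) • (u₁ - u₀) = -(L q₁) - r₁ • b)
    (h2 : q₀ = L u₀)
    (h3 : q₁ = L u₁)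
    (h4 : (r₁ - r₀) / Δt = (1 / 2) * ⟪b, (1 / Δt) • (u₁ - u₀)⟫) :
    (1 / 2) * ‖q₁‖ ^ 2 + r₁ ^ 2 =
      (1 / 2) * ‖q₀‖ ^ 2 + r₀ ^ 2 - ‖u₁ - u₀‖ ^ 2 / Δt
        - (1 / 2) * ‖q₁ - q₀‖ ^ 2 - (r₁ - r₀) ^ 2 := by
  have hb : ⟪b, u₁ - u₀⟫ = 2 * (r₁ - r₀) := by
    rw [real_inner_smul_right] at h4
    field_simp [hΔt.ne'] at h4
    linarith
  have hq : ⟪L q₁, u₁ - u₀⟫ = ⟪q₁, q₁ - q₀⟫ := by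
    rw [hL, map_sub, ← h2, ← h3]
  have h_tested : ‖u₁ - u₀‖ ^ 2 / Δt = -⟪q₁, q₁ - q₀⟫ - r₁ * ⟪b, u₁ - u₀⟫ := by
    have h := congrArg (⟪·, u₁ - u₀⟫) h1
    rw [real_inner_smul_left, real_inner_self_eq_norm_sq, inner_sub_left, inner_neg_left,
      real_inner_smul_left, hq] at h
    rw [← h]
    ring
  linear_combination h_tested - r₁ * hb - (1 / 2) * two_mul_real_inner_self_sub q₁ q₀

/-- Energy dissipation identity for the first-order SAV-DG scheme: with
`E(q, r) = (1/2)‖q‖² + r²`, one step of the scheme satisfies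
`E(q₁, r₁) = E(q₀, r₀) − ‖u₁ − u₀‖²/Δt − (1/2)‖q₁ − q₀‖² − (r₁ − r₀)²`. -/
theorem sav_dg_first_order_energy_identity
    {V : Type*} [NormedAddCommGroup V] [InnerProductSpace ℝ V] [FiniteDimensional ℝ V]
    (L : V →ₗ[ℝ] V) (hL : ∀ v w : V, ⟪L v, w⟫ = ⟪v, L w⟫)
    (Δt : ℝ) (hΔt : 0 < Δt) (b : V)
    (u₀ u₁ q₀ q₁ : V) (r₀ r₁ : ℝ)
    (h1 : (1 / Δt) • (u₁ - u₀) = -(L q₁) - r₁ • b)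
    (h2 : q₀ = L u₀)
    (h3 : q₁ = L u₁)
    (h4 : (r₁ - r₀) / Δt = (1 / 2) * ⟪b, (1 / Δt) • (u₁ - u₀)⟫) :
    (1 / 2) * ‖q₁‖ ^ 2 + r₁ ^ 2 =
      (1 / 2) * ‖q₀‖ ^ 2 + r₀ ^ 2 - ‖u₁ - u₀‖ ^ 2 / Δt
        - (1 / 2) * ‖q₁ - q₀‖ ^ 2 - (r₁ - r₀) ^ 2 :=
  sav_dg_first_order_energy_identity_general L hL Δt hΔt b u₀ u₁ q₀ q₁ r₀ r₁ h1 h2 h3 h4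
end

section
/- Let V be a finite-dimensional real inner product space, L : V → V a symmetric linear map, Δt > 0, and b ∈ V. For every u₀ ∈ V and r₀ ∈ ℝ, there exists a unique triple (u₁, q₁, r₁) ∈ V × V × ℝ satisfying the first-order SAV-DG step: (u₁ − u₀)/Δt = −L q₁ − r₁ b, q₁ = L u₁, and (r₁ − r₀)/Δt = (1/2) ⟪b, (u₁ − u₀)/Δt⟫. This holds for any time step Δt > 0. -/
open RealInnerProductSpace

/-!
Writing `w = u₁ - u₀`, the second and third equations give `q₁ = L u₁` and
`r₁ = r₀ + ½⟪b, w⟫`, and the first then becomes the linear system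
`((1/Δt) I + L² + ½ b⊗b) w = -L² u₀ - r₀ b`. Since `L` is symmetric,
`⟪(c I + L² + ½ b⊗b) v, v⟫ = c‖v‖² + ‖L v‖² + ½⟪b, v⟫²`, so for `c > 0` this operator is
injective, hence invertible in finite dimension.
-/

section

variable {V : Type*} [NormedAddCommGroup V] [InnerProductSpace ℝ V]

noncomputable def savOperator (L : V →ₗ[ℝ] V) (c : ℝ) (b : V) : V →ₗ[ℝ] V :=
  c • LinearMap.id + L ∘ₗ L + (1 / 2 : ℝ) • (innerₗ V b).smulRight b

variable {L : V →ₗ[ℝ] V} {c : ℝ} {b : V}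

theorem savOperator_apply (v : V) :
    savOperator L c b v = c • v + L (L v) + (1 / 2 * ⟪b, v⟫) • b := by
  simp [savOperator, smul_smul]

theorem inner_savOperator_apply_self (hL : L.IsSymmetric) (v : V) :
    ⟪savOperator L c b v, v⟫ = c * ‖v‖ ^ 2 + ‖L v‖ ^ 2 + 1 / 2 * ⟪b, v⟫ ^ 2 := by
  rw [savOperator_apply, inner_add_left, inner_add_left, real_inner_smul_left,
    real_inner_smul_left, hL, real_inner_self_eq_norm_sq, real_inner_self_eq_norm_sq,
    real_inner_comm v b]
  ring

theorem savOperator_injective (hL : L.IsSymmetric) (hc : 0 < c) :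
    Function.Injective (savOperator L c b) := by
  rw [← LinearMap.ker_eq_bot, LinearMap.ker_eq_bot']
  intro v hv
  have hzero : c * ‖v‖ ^ 2 + ‖L v‖ ^ 2 + 1 / 2 * ⟪b, v⟫ ^ 2 = 0 := by
    rw [← inner_savOperator_apply_self hL, hv, inner_zero_left]
  have hnorm : c * ‖v‖ ^ 2 = 0 := by nlinarith [sq_nonneg ‖v‖, sq_nonneg ‖L v‖, sq_nonneg ⟪b, v⟫]
  simpa [hc.ne'] using hnorm

theorem savOperator_bijective [FiniteDimensional ℝ V] (hL : L.IsSymmetric) (hc : 0 < c) :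
    Function.Bijective (savOperator L c b) :=
  let hinj := savOperator_injective (b := b) hL hc
  ⟨hinj, LinearMap.injective_iff_surjective.mp hinj⟩

theorem savStep_iff {Δt : ℝ} (hΔt : Δt ≠ 0) {u₀ u q : V} {r₀ r : ℝ} :
    ((1 / Δt) • (u - u₀) = -(L q) - r • b ∧ q = L u ∧
        (r - r₀) / Δt = 1 / 2 * ⟪b, (1 / Δt) • (u - u₀)⟫) ↔
      savOperator L (1 / Δt) b (u - u₀) = -(L (L u₀)) - r₀ • b ∧ q = L u ∧
        r = r₀ + 1 / 2 * ⟪b, u - u₀⟫ := by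
  have hr : (r - r₀) / Δt = 1 / 2 * ⟪b, (1 / Δt) • (u - u₀)⟫ ↔ r = r₀ + 1 / 2 * ⟪b, u - u₀⟫ := by
    rw [real_inner_smul_right, div_eq_iff hΔt]
    constructor <;> intro h
    · field_simp at h; linarith
    · field_simp; linarith
  rw [hr]
  constructor
  · rintro ⟨hu, rfl, rfl⟩
    refine ⟨?_, rfl, rfl⟩
    rw [savOperator_apply, hu, map_sub, map_sub, add_smul]
    abel
  · rintro ⟨hu, rfl, rfl⟩
    refine ⟨?_, rfl, rfl⟩
    have hsplit : (1 / Δt) • (u - u₀) = savOperator L (1 / Δt) b (u - u₀)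
        - L (L (u - u₀)) - (1 / 2 * ⟪b, u - u₀⟫) • b := by
      rw [savOperator_apply]; abel
    rw [hsplit, hu, map_sub, map_sub, add_smul]
    abel

end

/-- Unconditional unique solvability of the first-order SAV-DG step: for any
`Δt > 0`, `b ∈ V`, `u₀ ∈ V` and `r₀ ∈ ℝ`, there is a unique triple `(u₁, q₁, r₁)`
with `(u₁ − u₀)/Δt = −L q₁ − r₁ b`, `q₁ = L u₁`, and
`(r₁ − r₀)/Δt = (1/2)⟪b, (u₁ − u₀)/Δt⟫`. -/
theorem sav_dg_first_order_unique_solvability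
    {V : Type*} [NormedAddCommGroup V] [InnerProductSpace ℝ V] [FiniteDimensional ℝ V]
    (L : V →ₗ[ℝ] V) (hL : ∀ v w : V, ⟪L v, w⟫ = ⟪v, L w⟫)
    (Δt : ℝ) (hΔt : 0 < Δt) (b : V)
    (u₀ : V) (r₀ : ℝ) :
    ∃! t : V × V × ℝ,
      (1 / Δt) • (t.1 - u₀) = -(L t.2.1) - t.2.2 • b ∧
      t.2.1 = L t.1 ∧
      (t.2.2 - r₀) / Δt = (1 / 2) * ⟪b, (1 / Δt) • (t.1 - u₀)⟫ := by
  let A := LinearEquiv.ofBijective _ (savOperator_bijective (b := b) hL (one_div_pos.2 hΔt))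
  set w := A.symm (-(L (L u₀)) - r₀ • b)
  refine ⟨(u₀ + w, L (u₀ + w), r₀ + 1 / 2 * ⟪b, w⟫), ?_, ?_⟩
  · refine (savStep_iff hΔt.ne').2 ?_
    rw [add_sub_cancel_left]
    exact ⟨A.apply_symm_apply _, rfl, rfl⟩
  · rintro ⟨u, q, r⟩ hstep
    obtain ⟨hu, rfl, rfl⟩ := (savStep_iff (u := u) (q := q) (r := r) hΔt.ne').1 hstep
    have hw : u - u₀ = w := A.eq_symm_apply.2 hu
    rw [← hw, add_sub_cancel]
end

section
/- Let V be a finite-dimensional real inner product space, L : V → V a symmetric linear map, Δt > 0, and b ∈ V. Suppose u₀, u₁, q₀, q₁ ∈ V and r₀, r₁ ∈ ℝ satisfy the second-order SAV-DG step: (u₁ − u₀)/Δt = −L ((q₀ + q₁)/2) − ((r₀ + r₁)/2) b, q₀ = L u₀, q₁ = L u₁, and (r₁ − r₀)/Δt = (1/2) ⟪b, (u₁ − u₀)/Δt⟫. Then, with E(q, r) = (1/2)‖q‖² + r², the energy identity E(q₁, r₁) = E(q₀, r₀) − ‖u₁ − u₀‖²/Δt holds. -/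
open RealInnerProductSpace

/-!
Test the `u`-equation against the increment `w = u₁ - u₀`. By symmetry of `L` and `L w = q₁ - q₀`,
the `L`-term gives `(‖q₁‖² - ‖q₀‖²) / 2`, and by the `r`-equation the `b`-term gives `r₁² - r₀²`.
-/

theorem real_inner_add_sub_eq_norm_sq_sub_norm_sq {F : Type*} [NormedAddCommGroup F]
    [InnerProductSpace ℝ F] (x y : F) : ⟪x + y, y - x⟫ = ‖y‖ ^ 2 - ‖x‖ ^ 2 := by
  rw [inner_add_left, inner_sub_right, inner_sub_right, real_inner_self_eq_norm_sq,
    real_inner_self_eq_norm_sq, real_inner_comm x y]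
  ring

theorem LinearMap.IsSymmetric.inner_map_add_map_sub {F : Type*} [NormedAddCommGroup F]
    [InnerProductSpace ℝ F] {T : F →ₗ[ℝ] F} (hT : T.IsSymmetric) (x y : F) :
    ⟪T (T x + T y), y - x⟫ = ‖T y‖ ^ 2 - ‖T x‖ ^ 2 := by
  rw [hT, map_sub, real_inner_add_sub_eq_norm_sq_sub_norm_sq]

theorem sav_dg_second_order_energy_identity_general
    {V : Type*} [NormedAddCommGroup V] [InnerProductSpace ℝ V]
    (L : V →ₗ[ℝ] V) (hL : ∀ v w : V, ⟪L v, w⟫ = ⟪v, L w⟫)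
    (Δt : ℝ) (hΔt : 0 < Δt) (b : V)
    (u₀ u₁ q₀ q₁ : V) (r₀ r₁ : ℝ)
    (h1 : (1 / Δt) • (u₁ - u₀) = -(L ((1 / 2 : ℝ) • (q₀ + q₁))) - ((r₀ + r₁) / 2) • b)
    (h2 : q₀ = L u₀)
    (h3 : q₁ = L u₁)
    (h4 : (r₁ - r₀) / Δt = (1 / 2) * ⟪b, (1 / Δt) • (u₁ - u₀)⟫) :
    (1 / 2) * ‖q₁‖ ^ 2 + r₁ ^ 2 =
      (1 / 2) * ‖q₀‖ ^ 2 + r₀ ^ 2 - ‖u₁ - u₀‖ ^ 2 / Δt := by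
  subst h2 h3
  have hu_test : 1 / Δt * ‖u₁ - u₀‖ ^ 2 =
      -(1 / 2 * (‖L u₁‖ ^ 2 - ‖L u₀‖ ^ 2)) - (r₀ + r₁) / 2 * ⟪b, u₁ - u₀⟫ := by
    have := congrArg (⟪·, u₁ - u₀⟫) h1
    rwa [inner_sub_left, inner_neg_left, real_inner_smul_left, real_inner_self_eq_norm_sq,
      map_smul, real_inner_smul_left, real_inner_smul_left,
      LinearMap.IsSymmetric.inner_map_add_map_sub hL] at this
  have hr_step : r₁ - r₀ = 1 / 2 * ⟪b, u₁ - u₀⟫ := by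
    rw [real_inner_smul_right] at h4
    field_simp at h4
    linarith
  linear_combination hu_test + (r₀ + r₁) * hr_step

/-- Energy dissipation identity for the second-order SAV-DG scheme: with
`E(q, r) = (1/2)‖q‖² + r²`, one step of the Crank–Nicolson type SAV-DG scheme
satisfies `E(q₁, r₁) = E(q₀, r₀) − ‖u₁ − u₀‖²/Δt`. -/
theorem sav_dg_second_order_energy_identity
    {V : Type*} [NormedAddCommGroup V] [InnerProductSpace ℝ V] [FiniteDimensional ℝ V]
    (L : V →ₗ[ℝ] V) (hL : ∀ v w : V, ⟪L v, w⟫ = ⟪v, L w⟫)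
    (Δt : ℝ) (hΔt : 0 < Δt) (b : V)
    (u₀ u₁ q₀ q₁ : V) (r₀ r₁ : ℝ)
    (h1 : (1 / Δt) • (u₁ - u₀) = -(L ((1 / 2 : ℝ) • (q₀ + q₁))) - ((r₀ + r₁) / 2) • b)
    (h2 : q₀ = L u₀)
    (h3 : q₁ = L u₁)
    (h4 : (r₁ - r₀) / Δt = (1 / 2) * ⟪b, (1 / Δt) • (u₁ - u₀)⟫) :
    (1 / 2) * ‖q₁‖ ^ 2 + r₁ ^ 2 =
      (1 / 2) * ‖q₀‖ ^ 2 + r₀ ^ 2 - ‖u₁ - u₀‖ ^ 2 / Δt :=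
  sav_dg_second_order_energy_identity_general L hL Δt hΔt b u₀ u₁ q₀ q₁ r₀ r₁ h1 h2 h3 h4
end

section
/- Let V be a finite-dimensional real inner product space, L : V → V a symmetric linear map, Δt > 0, and b ∈ V. For every u₀ ∈ V and r₀ ∈ ℝ, there exists a unique triple (u₁, q₁, r₁) ∈ V × V × ℝ satisfying the second-order SAV-DG step: (u₁ − u₀)/Δt = −L ((L u₀ + q₁)/2) − ((r₀ + r₁)/2) b, q₁ = L u₁, and (r₁ − r₀)/Δt = (1/2) ⟪b, (u₁ − u₀)/Δt⟫. This holds for any time step Δt > 0. -/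
/-!
Eliminating `q₁ = L u₁` and `r₁ = r₀ + ⟪b, u₁ - u₀⟫ / 2` turns the step into a single linear
equation `T u₁ = f` with `T = I + (Δt/2) L² + (Δt/4) b ⊗ b`. For symmetric `L`,
`⟪T u, u⟫ = ‖u‖² + (Δt/2) ‖L u‖² + (Δt/4) ⟪b, u⟫² ≥ ‖u‖²`, so `T` is injective, hence bijective
in finite dimension.
-/

open RealInnerProductSpace

section

variable {V : Type*} [NormedAddCommGroup V] [InnerProductSpace ℝ V]

theorem LinearMap.bijective_of_inner_map_self_pos [FiniteDimensional ℝ V] {T : V →ₗ[ℝ] V}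
    (hT : ∀ u ≠ 0, 0 < ⟪T u, u⟫) : Function.Bijective T := by
  have hinj : Function.Injective T := by
    rw [← LinearMap.ker_eq_bot, LinearMap.ker_eq_bot']
    intro u hu
    by_contra hne
    simpa [hu] using hT u hne
  exact ⟨hinj, LinearMap.injective_iff_surjective.mp hinj⟩

namespace SAV

noncomputable def stepOperator (L : V →ₗ[ℝ] V) (Δt : ℝ) (b : V) : V →ₗ[ℝ] V :=
  LinearMap.id + (Δt / 2) • (L ∘ₗ L) + (Δt / 4) • (innerₛₗ ℝ b).smulRight b

variable {L : V →ₗ[ℝ] V} {Δt : ℝ} {b : V}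

theorem stepOperator_apply (u : V) :
    stepOperator L Δt b u = u + (Δt / 2) • L (L u) + (Δt / 4 * ⟪b, u⟫) • b := by
  simp [stepOperator, mul_smul]

theorem inner_stepOperator_self (hL : L.IsSymmetric) (u : V) :
    ⟪stepOperator L Δt b u, u⟫ = ‖u‖ ^ 2 + Δt / 2 * ‖L u‖ ^ 2 + Δt / 4 * ⟪b, u⟫ ^ 2 := by
  rw [stepOperator_apply, inner_add_left, inner_add_left, real_inner_smul_left,
    real_inner_smul_left, hL, real_inner_self_eq_norm_sq, real_inner_self_eq_norm_sq,
    real_inner_comm u b]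
  ring

theorem stepOperator_bijective [FiniteDimensional ℝ V] (hL : L.IsSymmetric) (hΔt : 0 ≤ Δt) :
    Function.Bijective (stepOperator L Δt b) :=
  LinearMap.bijective_of_inner_map_self_pos fun u hu => by
    rw [inner_stepOperator_self hL]
    have : 0 < ‖u‖ := norm_pos_iff.mpr hu
    positivity

theorem auxiliary_eq_iff (hΔt : Δt ≠ 0) (u₀ u : V) (r₀ r : ℝ) :
    (r - r₀) / Δt = 1 / 2 * ⟪b, (1 / Δt) • (u - u₀)⟫ ↔ r = r₀ + ⟪b, u - u₀⟫ / 2 := by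
  rw [real_inner_smul_right]
  field_simp
  constructor <;> intro h <;> linarith

theorem evolution_eq_iff (hΔt : Δt ≠ 0) (u₀ u : V) (r₀ : ℝ) :
    (1 / Δt) • (u - u₀) =
        -(L ((1 / 2 : ℝ) • (L u₀ + L u))) - ((r₀ + (r₀ + ⟪b, u - u₀⟫ / 2)) / 2) • b ↔
      stepOperator L Δt b u =
        u₀ - (Δt / 2) • L (L u₀) + (Δt / 4 * ⟪b, u₀⟫ - Δt * r₀) • b := by
  rw [one_div, inv_smul_eq_iff₀ hΔt, ← sub_eq_zero, ← sub_eq_zero (a := stepOperator _ _ _ _)]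
  convert Iff.rfl using 2
  rw [stepOperator_apply]
  simp only [map_smul, map_add, inner_sub_right]
  module

theorem step_iff (hΔt : Δt ≠ 0) (u₀ u q : V) (r₀ r : ℝ) :
    ((1 / Δt) • (u - u₀) = -(L ((1 / 2 : ℝ) • (L u₀ + q))) - ((r₀ + r) / 2) • b ∧
        q = L u ∧ (r - r₀) / Δt = 1 / 2 * ⟪b, (1 / Δt) • (u - u₀)⟫) ↔
      stepOperator L Δt b u = u₀ - (Δt / 2) • L (L u₀) + (Δt / 4 * ⟪b, u₀⟫ - Δt * r₀) • b ∧
        q = L u ∧ r = r₀ + ⟪b, u - u₀⟫ / 2 := by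
  rw [auxiliary_eq_iff hΔt]
  constructor <;> rintro ⟨h, rfl, rfl⟩
  · exact ⟨(evolution_eq_iff hΔt u₀ u r₀).1 h, rfl, rfl⟩
  · exact ⟨(evolution_eq_iff hΔt u₀ u r₀).2 h, rfl, rfl⟩

end SAV

end

open SAV in
/-- Unconditional unique solvability of the second-order SAV-DG step: for any
`Δt > 0`, `b ∈ V`, `u₀ ∈ V` and `r₀ ∈ ℝ`, there is a unique triple `(u₁, q₁, r₁)`
with `(u₁ − u₀)/Δt = −L((L u₀ + q₁)/2) − ((r₀ + r₁)/2) b`, `q₁ = L u₁`, and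
`(r₁ − r₀)/Δt = (1/2)⟪b, (u₁ − u₀)/Δt⟫`. -/
theorem sav_dg_second_order_unique_solvability
    {V : Type*} [NormedAddCommGroup V] [InnerProductSpace ℝ V] [FiniteDimensional ℝ V]
    (L : V →ₗ[ℝ] V) (hL : ∀ v w : V, ⟪L v, w⟫ = ⟪v, L w⟫)
    (Δt : ℝ) (hΔt : 0 < Δt) (b : V)
    (u₀ : V) (r₀ : ℝ) :
    ∃! t : V × V × ℝ,
      (1 / Δt) • (t.1 - u₀) =
        -(L ((1 / 2 : ℝ) • (L u₀ + t.2.1))) - ((r₀ + t.2.2) / 2) • b ∧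
      t.2.1 = L t.1 ∧
      (t.2.2 - r₀) / Δt = (1 / 2) * ⟪b, (1 / Δt) • (t.1 - u₀)⟫ := by
  obtain ⟨hinj, hsurj⟩ := stepOperator_bijective (b := b) hL hΔt.le
  obtain ⟨u₁, hu₁⟩ := hsurj (u₀ - (Δt / 2) • L (L u₀) + (Δt / 4 * ⟪b, u₀⟫ - Δt * r₀) • b)
  refine ⟨(u₁, L u₁, r₀ + ⟪b, u₁ - u₀⟫ / 2), (step_iff hΔt.ne' _ _ _ _ _).2 ⟨hu₁, rfl, rfl⟩, ?_⟩
  rintro ⟨u, q, r⟩ h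
  obtain ⟨hu, rfl, rfl⟩ := (step_iff hΔt.ne' u₀ u q r₀ r).1 h
  rw [hinj (hu.trans hu₁.symm)]
end

section
/- Let V be a finite-dimensional real inner product space, L : V → V a symmetric linear map, Δt > 0, b ∈ V, and B = (I + Δt L²)⁻¹. Suppose u₀, u₁, q₁ ∈ V and r₀, r₁ ∈ ℝ satisfy the first-order SAV-DG step: (u₁ − u₀)/Δt = −L q₁ − r₁ b, q₁ = L u₁, and (r₁ − r₀)/Δt = (1/2) ⟪b, (u₁ − u₀)/Δt⟫. Set ξ = u₀ − Δt r₀ b + (Δt/2) ⟪b, u₀⟫ b. Then r₁ = r₀ − (1/2)⟪b, u₀⟫ + (1/2) R, where R = ⟪b, B ξ⟫ / (1 + (Δt/2) ⟪b, B b⟫). -/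
/-!
The implicit step reads `(I + Δt L²) u₁ = u₀ - Δt r₁ b`, so `u₁ = B (u₀ - Δt r₁ b)`. Pairing with `b`
turns the update of `r` into a linear equation for `r₁` with coefficient `1 + (Δt/2)⟪b, B b⟫`,
which is positive because `B` is the inverse of the positive operator `I + Δt L²`.
-/

open RealInnerProductSpace

namespace LinearMap

variable {𝕜 E : Type*} [RCLike 𝕜] [NormedAddCommGroup E] [InnerProductSpace 𝕜 E]

theorem IsSymmetric.isPositive_comp_self {T : E →ₗ[𝕜] E} (hT : T.IsSymmetric) :
    (T ∘ₗ T).IsPositive :=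
  ⟨fun x y ↦ by rw [comp_apply, hT, hT]; rfl,
    fun x ↦ by rw [comp_apply, hT]; exact inner_self_nonneg⟩

open scoped ComplexOrder in
theorem IsPositive.inner_apply_nonneg_of_comp_eq_id {A B : E →ₗ[𝕜] E} (hA : A.IsPositive)
    (hAB : A ∘ₗ B = id) (x : E) : 0 ≤ inner 𝕜 x (B x) := by
  simpa [← comp_apply, hAB] using hA.inner_nonneg_left (B x)

end LinearMap

theorem sav_dg_first_order_pre_evaluation_general
    {V : Type*} [NormedAddCommGroup V] [InnerProductSpace ℝ V]
    (L : V →ₗ[ℝ] V) (hL : ∀ v w : V, ⟪L v, w⟫ = ⟪v, L w⟫)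
    (Δt : ℝ) (hΔt : 0 < Δt) (b : V)
    (B : V →ₗ[ℝ] V)
    (hB1 : B ∘ₗ (LinearMap.id + Δt • (L ∘ₗ L)) = LinearMap.id)
    (hB2 : (LinearMap.id + Δt • (L ∘ₗ L)) ∘ₗ B = LinearMap.id)
    (u₀ u₁ q₁ : V) (r₀ r₁ : ℝ)
    (h1 : (1 / Δt) • (u₁ - u₀) = -(L q₁) - r₁ • b)
    (h2 : q₁ = L u₁)
    (h3 : (r₁ - r₀) / Δt = (1 / 2) * ⟪b, (1 / Δt) • (u₁ - u₀)⟫)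
    (ξ : V) (hξ : ξ = u₀ - (Δt * r₀) • b + ((Δt / 2) * ⟪b, u₀⟫) • b) :
    r₁ = r₀ - (1 / 2) * ⟪b, u₀⟫ +
      (1 / 2) * (⟪b, B ξ⟫ / (1 + (Δt / 2) * ⟪b, B b⟫)) := by
  have hΔt₀ : Δt ≠ 0 := hΔt.ne'
  have hβ : 0 ≤ ⟪b, B b⟫ :=
    (LinearMap.isPositive_id.add (LinearMap.IsSymmetric.isPositive_comp_self hL
      |>.smul_of_nonneg hΔt.le)).inner_apply_nonneg_of_comp_eq_id hB2 b
  have hstep : (LinearMap.id + Δt • (L ∘ₗ L) : V →ₗ[ℝ] V) u₁ = u₀ - (Δt * r₁) • b := by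
    have h1' := congrArg (Δt • ·) h1
    simp only [smul_smul, mul_one_div_cancel hΔt₀, one_smul] at h1'
    simp only [LinearMap.add_apply, LinearMap.id_apply, LinearMap.smul_apply,
      LinearMap.comp_apply, ← h2]
    linear_combination (norm := module) h1'
  have hu₁ : u₁ = B (u₀ - (Δt * r₁) • b) := by
    rw [← hstep, ← LinearMap.comp_apply, hB1, LinearMap.id_apply]
  have hbu₁ : ⟪b, u₁⟫ = ⟪b, B u₀⟫ - Δt * r₁ * ⟪b, B b⟫ := by
    rw [hu₁, map_sub, map_smul, inner_sub_right, real_inner_smul_right]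
  have hbξ : ⟪b, B ξ⟫ = ⟪b, B u₀⟫ - Δt * r₀ * ⟪b, B b⟫ + (Δt / 2) * ⟪b, u₀⟫ * ⟪b, B b⟫ := by
    rw [hξ, map_add, map_sub, map_smul, map_smul, inner_add_right, inner_sub_right,
      real_inner_smul_right, real_inner_smul_right]
  have hr : r₁ - r₀ = (1 / 2) * (⟪b, B u₀⟫ - Δt * r₁ * ⟪b, B b⟫ - ⟪b, u₀⟫) := by
    rw [real_inner_smul_right, inner_sub_right, div_eq_iff hΔt₀] at h3
    rw [h3, ← hbu₁]
    field_simp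
  rw [hbξ]
  field_simp
  linear_combination 4 * hr

/-- Pre-evaluation formula for the auxiliary variable in the first-order SAV-DG
scheme: with `B = (I + Δt L²)⁻¹` and `ξ = u₀ − Δt r₀ b + (Δt/2)⟪b, u₀⟫ b`, one has
`r₁ = r₀ − (1/2)⟪b, u₀⟫ + (1/2) R` where `R = ⟪b, B ξ⟫ / (1 + (Δt/2)⟪b, B b⟫)`. -/
theorem sav_dg_first_order_pre_evaluation
    {V : Type*} [NormedAddCommGroup V] [InnerProductSpace ℝ V] [FiniteDimensional ℝ V]
    (L : V →ₗ[ℝ] V) (hL : ∀ v w : V, ⟪L v, w⟫ = ⟪v, L w⟫)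
    (Δt : ℝ) (hΔt : 0 < Δt) (b : V)
    (B : V →ₗ[ℝ] V)
    (hB1 : B ∘ₗ (LinearMap.id + Δt • (L ∘ₗ L)) = LinearMap.id)
    (hB2 : (LinearMap.id + Δt • (L ∘ₗ L)) ∘ₗ B = LinearMap.id)
    (u₀ u₁ q₁ : V) (r₀ r₁ : ℝ)
    (h1 : (1 / Δt) • (u₁ - u₀) = -(L q₁) - r₁ • b)
    (h2 : q₁ = L u₁)
    (h3 : (r₁ - r₀) / Δt = (1 / 2) * ⟪b, (1 / Δt) • (u₁ - u₀)⟫)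
    (ξ : V) (hξ : ξ = u₀ - (Δt * r₀) • b + ((Δt / 2) * ⟪b, u₀⟫) • b) :
    r₁ = r₀ - (1 / 2) * ⟪b, u₀⟫ +
      (1 / 2) * (⟪b, B ξ⟫ / (1 + (Δt / 2) * ⟪b, B b⟫)) :=
  sav_dg_first_order_pre_evaluation_general L hL Δt hΔt b B hB1 hB2 u₀ u₁ q₁ r₀ r₁ h1 h2 h3 ξ hξ
end

section
/- Let V be a finite-dimensional real inner product space, L : V → V a symmetric linear map, Δt > 0, b ∈ V, and B = (I + Δt L²)⁻¹. Suppose u₀, u₁, q₁ ∈ V and r₀, r₁ ∈ ℝ satisfy the first-order SAV-DG step: (u₁ − u₀)/Δt = −L q₁ − r₁ b, q₁ = L u₁, and (r₁ − r₀)/Δt = (1/2) ⟪b, (u₁ − u₀)/Δt⟫. Set ξ = u₀ − Δt r₀ b + (Δt/2) ⟪b, u₀⟫ b. Then ⟪b, u₁⟫ = ⟪b, B ξ⟫ / (1 + (Δt/2) ⟪b, B b⟫). -/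
open RealInnerProductSpace

/-!
The operator `A = I + Δt L²` is positive, hence so is its right inverse `B`; in particular `B` is
symmetric and `⟪b, B b⟫ ≥ 0`. Eliminating `q₁` and `r₁` turns the scheme into
`A u₁ = ξ - (Δt/2)⟪b, u₁⟫ b`, and pairing with `b` through the symmetry of `A` and `B` gives the
scalar linear equation `⟪b, u₁⟫ (1 + (Δt/2)⟪b, B b⟫) = ⟪b, B ξ⟫`.
-/

namespace LinearMap

variable {𝕜 E : Type*} [RCLike 𝕜] [NormedAddCommGroup E] [InnerProductSpace 𝕜 E]
  {A B : E →ₗ[𝕜] E}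

open scoped InnerProductSpace

theorem IsSymmetric.isPositive_comp_self_s10 {L : E →ₗ[𝕜] E} (hL : L.IsSymmetric) :
    (L ∘ₗ L).IsPositive :=
  ⟨fun x y => by simp only [comp_apply, hL _ y, hL x], fun x => by
    rw [comp_apply, hL]; exact inner_self_nonneg⟩

theorem IsSymmetric.of_comp_eq_id (hA : A.IsSymmetric) (h : A ∘ₗ B = id) : B.IsSymmetric := by
  have hAB (x : E) : A (B x) = x := congrArg (· x) h
  intro x y
  calc ⟪B x, y⟫_𝕜 = ⟪B x, A (B y)⟫_𝕜 := by rw [hAB]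
    _ = ⟪A (B x), B y⟫_𝕜 := (hA _ _).symm
    _ = ⟪x, B y⟫_𝕜 := by rw [hAB]

theorem IsPositive.of_comp_eq_id (hA : A.IsPositive) (h : A ∘ₗ B = id) : B.IsPositive := by
  refine ⟨hA.isSymmetric.of_comp_eq_id h, fun x => ?_⟩
  have hAB : A (B x) = x := congrArg (· x) h
  simpa only [hAB] using hA.re_inner_nonneg_right (B x)

theorem IsSymmetric.inner_apply_apply_of_comp_eq_id (hA : A.IsSymmetric) (h : A ∘ₗ B = id)
    (x u : E) :
    ⟪x, B (A u)⟫_𝕜 = ⟪x, u⟫_𝕜 := by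
  rw [← hA.of_comp_eq_id h, ← hA, ← comp_apply A B, h, id_apply]

end LinearMap

theorem sav_first_order_step_eq {V : Type*} [NormedAddCommGroup V] [InnerProductSpace ℝ V]
    {L : V →ₗ[ℝ] V} {Δt : ℝ} (hΔt : Δt ≠ 0) {b u₀ u₁ q₁ ξ : V} {r₀ r₁ : ℝ}
    (h1 : (1 / Δt) • (u₁ - u₀) = -(L q₁) - r₁ • b)
    (h2 : q₁ = L u₁)
    (h3 : (r₁ - r₀) / Δt = (1 / 2) * ⟪b, (1 / Δt) • (u₁ - u₀)⟫)
    (hξ : ξ = u₀ - (Δt * r₀) • b + ((Δt / 2) * ⟪b, u₀⟫) • b) :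
    (LinearMap.id + Δt • (L ∘ₗ L) : V →ₗ[ℝ] V) u₁ = ξ - ((Δt / 2) * ⟪b, u₁⟫) • b := by
  have hu : u₁ - u₀ = Δt • (-(L (L u₁)) - r₁ • b) := by
    rw [← h2, ← h1, smul_smul, mul_one_div_cancel hΔt, one_smul]
  have hr : Δt * r₁ = Δt * r₀ + (Δt / 2) * (⟪b, u₁⟫ - ⟪b, u₀⟫) := by
    rw [real_inner_smul_right, inner_sub_right] at h3
    field_simp at h3
    linear_combination Δt * h3 / 2
  simp only [LinearMap.add_apply, LinearMap.id_apply, LinearMap.smul_apply, LinearMap.comp_apply,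
    hξ]
  linear_combination (norm := module) hu - hr • b

theorem sav_dg_first_order_nonlocal_term_general
    {V : Type*} [NormedAddCommGroup V] [InnerProductSpace ℝ V]
    (L : V →ₗ[ℝ] V) (hL : ∀ v w : V, ⟪L v, w⟫ = ⟪v, L w⟫)
    (Δt : ℝ) (hΔt : 0 < Δt) (b : V)
    (B : V →ₗ[ℝ] V)
    (hB2 : (LinearMap.id + Δt • (L ∘ₗ L)) ∘ₗ B = LinearMap.id)
    (u₀ u₁ q₁ : V) (r₀ r₁ : ℝ)
    (h1 : (1 / Δt) • (u₁ - u₀) = -(L q₁) - r₁ • b)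
    (h2 : q₁ = L u₁)
    (h3 : (r₁ - r₀) / Δt = (1 / 2) * ⟪b, (1 / Δt) • (u₁ - u₀)⟫)
    (ξ : V) (hξ : ξ = u₀ - (Δt * r₀) • b + ((Δt / 2) * ⟪b, u₀⟫) • b) :
    ⟪b, u₁⟫ = ⟪b, B ξ⟫ / (1 + (Δt / 2) * ⟪b, B b⟫) := by
  set A := LinearMap.id + Δt • (L ∘ₗ L)
  have hA : A.IsPositive :=
    LinearMap.isPositive_id.add
      ((LinearMap.IsSymmetric.isPositive_comp_self_s10 hL).smul_of_nonneg hΔt.le)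
  have hAu : A u₁ = ξ - ((Δt / 2) * ⟪b, u₁⟫) • b := sav_first_order_step_eq hΔt.ne' h1 h2 h3 hξ
  have hinner : ⟪b, u₁⟫ = ⟪b, B ξ⟫ - (Δt / 2) * ⟪b, u₁⟫ * ⟪b, B b⟫ := by
    conv_lhs => rw [← hA.isSymmetric.inner_apply_apply_of_comp_eq_id hB2, hAu]
    rw [map_sub, map_smul, inner_sub_right, real_inner_smul_right]
  have hBb : 0 ≤ ⟪b, B b⟫ := (hA.of_comp_eq_id hB2).inner_nonneg_right b
  rw [eq_div_iff (by positivity)]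
  linarith

/-- Key intermediate identity for the pre-evaluation of the auxiliary variable in
the first-order SAV-DG scheme: with `B = (I + Δt L²)⁻¹` and
`ξ = u₀ − Δt r₀ b + (Δt/2)⟪b, u₀⟫ b`, one has
`⟪b, u₁⟫ = ⟪b, B ξ⟫ / (1 + (Δt/2)⟪b, B b⟫)`. -/
theorem sav_dg_first_order_nonlocal_term
    {V : Type*} [NormedAddCommGroup V] [InnerProductSpace ℝ V] [FiniteDimensional ℝ V]
    (L : V →ₗ[ℝ] V) (hL : ∀ v w : V, ⟪L v, w⟫ = ⟪v, L w⟫)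
    (Δt : ℝ) (hΔt : 0 < Δt) (b : V)
    (B : V →ₗ[ℝ] V)
    (hB1 : B ∘ₗ (LinearMap.id + Δt • (L ∘ₗ L)) = LinearMap.id)
    (hB2 : (LinearMap.id + Δt • (L ∘ₗ L)) ∘ₗ B = LinearMap.id)
    (u₀ u₁ q₁ : V) (r₀ r₁ : ℝ)
    (h1 : (1 / Δt) • (u₁ - u₀) = -(L q₁) - r₁ • b)
    (h2 : q₁ = L u₁)
    (h3 : (r₁ - r₀) / Δt = (1 / 2) * ⟪b, (1 / Δt) • (u₁ - u₀)⟫)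
    (ξ : V) (hξ : ξ = u₀ - (Δt * r₀) • b + ((Δt / 2) * ⟪b, u₀⟫) • b) :
    ⟪b, u₁⟫ = ⟪b, B ξ⟫ / (1 + (Δt / 2) * ⟪b, B b⟫) :=
  sav_dg_first_order_nonlocal_term_general L hL Δt hΔt b B hB2 u₀ u₁ q₁ r₀ r₁ h1 h2 h3 ξ hξ
end

section
/- Let V be a finite-dimensional real inner product space and L : V → V a symmetric linear map. Let I ⊆ ℝ be an open interval, and let u : I → V, r : I → ℝ be differentiable and b : I → V be any function such that for all t ∈ I: u'(t) = −L (L u(t)) − r(t) b(t) and r'(t) = (1/2) ⟪b(t), u'(t)⟫. Then for every t ∈ I the function t ↦ (1/2)‖L u(t)‖² + r(t)² is differentiable with derivative equal to −‖u'(t)‖²; in particular it is non-increasing on I. -/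
/-!
Since `L` is symmetric, the chain rule gives the energy the rate `⟪L (L u), u'⟫ + 2 r r'`.
Substituting `L (L u) = -u' - r b` and `2 r' = ⟪b, u'⟫`, the two `r ⟪b, u'⟫` terms cancel,
leaving `-‖u'‖²`; a nonpositive derivative on an interval makes the energy antitone.
-/

open RealInnerProductSpace

theorem antitoneOn_of_hasDerivAt_nonpos {I : Set ℝ} (hI : IsOpen I)
    (hI' : I.OrdConnected) {f f' : ℝ → ℝ} (hf : ∀ t ∈ I, HasDerivAt f (f' t) t)
    (hf' : ∀ t ∈ I, f' t ≤ 0) : AntitoneOn f I := by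
  refine antitoneOn_of_hasDerivWithinAt_nonpos (f' := f') hI'.convex
    (fun t ht => (hf t ht).continuousAt.continuousWithinAt) ?_ ?_ <;>
    rw [hI.interior_eq]
  exacts [fun t ht => (hf t ht).hasDerivWithinAt, hf']

section

variable {V : Type*} [NormedAddCommGroup V] [InnerProductSpace ℝ V]

theorem HasDerivAt.linearMap_comp [FiniteDimensional ℝ V] (L : V →ₗ[ℝ] V) {u : ℝ → V} {u' : V}
    {t : ℝ} (hu : HasDerivAt u u' t) : HasDerivAt (fun s => L (u s)) (L u') t :=
  L.toContinuousLinearMap.hasFDerivAt.comp_hasDerivAt t hu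

theorem HasDerivAt.half_norm_sq_map_add_sq [FiniteDimensional ℝ V] (L : V →ₗ[ℝ] V)
    {u : ℝ → V} {r : ℝ → ℝ} {u' : V} {r' t : ℝ} (hu : HasDerivAt u u' t)
    (hr : HasDerivAt r r' t) :
    HasDerivAt (fun s => (1 / 2) * ‖L (u s)‖ ^ 2 + r s ^ 2)
      (⟪L (u t), L u'⟫ + 2 * r t * r') t := by
  refine (((hu.linearMap_comp L).norm_sq.const_mul (1 / 2)).add (hr.fun_pow 2)).congr_deriv ?_
  push_cast
  ring

theorem inner_map_add_two_mul_eq_neg_norm_sq (L : V →ₗ[ℝ] V)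
    (hL : L.IsSymmetric) {v v' b : V} {ρ ρ' : ℝ}
    (h1 : v' = -(L (L v)) - ρ • b) (h2 : ρ' = 1 / 2 * ⟪b, v'⟫) :
    ⟪L v, L v'⟫ + 2 * ρ * ρ' = -‖v'‖ ^ 2 := by
  have hLL : L (L v) = -v' - ρ • b := by rw [h1]; abel
  rw [← hL (L v) v', hLL, h2, inner_sub_left, inner_neg_left, real_inner_smul_left,
    real_inner_self_eq_norm_sq]
  ring

end

/-- Modified energy dissipation law for the semi-discrete SAV system: if
`u' = −L(L u) − r b` and `r' = (1/2)⟪b, u'⟫` on an open interval `I`, then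
`t ↦ (1/2)‖L u(t)‖² + r(t)²` has derivative `−‖u'(t)‖²` at each `t ∈ I`,
and in particular is non-increasing on `I`. -/
theorem sav_dg_semi_discrete_energy_dissipation
    {V : Type*} [NormedAddCommGroup V] [InnerProductSpace ℝ V] [FiniteDimensional ℝ V]
    (L : V →ₗ[ℝ] V) (hL : ∀ v w : V, ⟪L v, w⟫ = ⟪v, L w⟫)
    (I : Set ℝ) (hIopen : IsOpen I) (hIconn : I.OrdConnected)
    (u u' : ℝ → V) (r r' : ℝ → ℝ) (b : ℝ → V)
    (hu : ∀ t ∈ I, HasDerivAt u (u' t) t)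
    (hr : ∀ t ∈ I, HasDerivAt r (r' t) t)
    (h1 : ∀ t ∈ I, u' t = -(L (L (u t))) - r t • b t)
    (h2 : ∀ t ∈ I, r' t = (1 / 2) * ⟪b t, u' t⟫) :
    (∀ t ∈ I, HasDerivAt (fun s => (1 / 2) * ‖L (u s)‖ ^ 2 + (r s) ^ 2)
        (-‖u' t‖ ^ 2) t) ∧
    AntitoneOn (fun s => (1 / 2) * ‖L (u s)‖ ^ 2 + (r s) ^ 2) I := by
  have hasDerivAt_energy : ∀ t ∈ I, HasDerivAt (fun s => (1 / 2) * ‖L (u s)‖ ^ 2 + (r s) ^ 2)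
      (-‖u' t‖ ^ 2) t := fun t ht =>
    ((hu t ht).half_norm_sq_map_add_sq L (hr t ht)).congr_deriv
      (inner_map_add_two_mul_eq_neg_norm_sq L hL (h1 t ht) (h2 t ht))
  exact ⟨hasDerivAt_energy, antitoneOn_of_hasDerivAt_nonpos hIopen hIconn hasDerivAt_energy
    fun t _ => neg_nonpos.2 (sq_nonneg _)⟩
end
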